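/- Let K be a finite extension of ℚ_p with valuation ring R, uniformizer π, and fix n' ≥ 1, k > v(n'), k' = k + v(n'). For γ ∈ K with 0 ≤ v(γ) < n', the map x ↦ γ x^{n'} is a bijection from R^(k) onto γ·(R ∩ P_{n'}^(k')), and v(γ x^{n'}) = v(γ) + n'·v(x) for all x ∈ R^(k). -/

import Mathlib

/-- A normalized discrete valuation (with values in `WithTop ℤ`) on a finite extension `K`
of `ℚ_p`, compatible with the `p`-adic valuation up to a ramification index. -/
structure PadicStructure (p : ℕ) [Fact p.Prime] (K : Type*) [Field K] [Algebra ℚ_[p] K]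
    [FiniteDimensional ℚ_[p] K] where
  v : K → WithTop ℤ
  v_zero : v 0 = ⊤
  v_ne_top : ∀ {x : K}, x ≠ 0 → v x ≠ ⊤
  v_mul : ∀ x y : K, v (x * y) = v x + v y
  v_add : ∀ x y : K, min (v x) (v y) ≤ v (x + y)
  ramification : ∃ e : ℕ, 0 < e ∧
    ∀ x : ℚ_[p], x ≠ 0 → v (algebraMap ℚ_[p] K x) = (((e : ℤ) * x.valuation : ℤ) : WithTop ℤ)

namespace PadicStructure

variable {p : ℕ} [Fact p.Prime] {K : Type*} [Field K] [Algebra ℚ_[p] K]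
  [FiniteDimensional ℚ_[p] K] (V : PadicStructure p K)

/-- The valuation ring `R = {x : v x ≥ 0}`. -/
def R : Set K := {x | 0 ≤ V.v x}

/-- `P n`, the set of nonzero `n`-th powers of `K`. -/
def P (_W : PadicStructure p K) (n : ℕ) : Set K := {x | x ≠ 0 ∧ ∃ y : K, y ^ n = x}

/-- `X^(k)`: elements `x ≠ 0` of `X` with `v (π ^ (-v x) * x - 1) ≥ k`. -/
def shift (π : K) (X : Set K) (k : ℕ) : Set K :=
  {x | x ∈ X ∧ x ≠ 0 ∧ ∀ s : ℤ, V.v x = (s : WithTop ℤ) →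
    ((k : ℤ) : WithTop ℤ) ≤ V.v (π ^ (-s) * x - 1)}

/-- `K^(k)`. -/
def Kshift (π : K) (k : ℕ) : Set K := V.shift π Set.univ k

end PadicStructure

/-- Semi-algebraic subsets of `K^m`: Boolean combinations of sets `{x : f x ∈ P n}`. -/
inductive IsSA (K : Type*) [Field K] : {m : ℕ} → Set (Fin m → K) → Prop
  | basic {m : ℕ} (f : MvPolynomial (Fin m) K) (n : ℕ) (hn : 0 < n) :
      IsSA K {x | MvPolynomial.eval x f ≠ 0 ∧ ∃ y : K, y ^ n = MvPolynomial.eval x f}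
  | compl {m : ℕ} {A : Set (Fin m → K)} : IsSA K A → IsSA K Aᶜ
  | union {m : ℕ} {A B : Set (Fin m → K)} : IsSA K A → IsSA K B → IsSA K (A ∪ B)

/-- A semi-algebraic bijection (isomorphism) between `X ⊆ K^n` and `Y ⊆ K^m`:
a bijection whose graph is semi-algebraic. -/
def SAIso (K : Type*) [Field K] {n m : ℕ} (X : Set (Fin n → K)) (Y : Set (Fin m → K)) : Prop :=
  ∃ f : (Fin n → K) → (Fin m → K), Set.BijOn f X Y ∧
    IsSA K {z : Fin (n + m) → K |
      (fun i => z (Fin.castAdd m i)) ∈ X ∧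
      f (fun i => z (Fin.castAdd m i)) = fun j => z (Fin.natAdd n j)}

/-!
The `n`-th power map is studied on the angular component `π ^ (-v x) * x`, a unit close to `1`.
By the binomial theorem, `v (b - 1) ≥ k` gives `v (b ^ n - 1) ≥ k + v n`, and if `a ^ n = b ^ n`
with `b` a unit then expanding `(b + (a - b)) ^ n` forces `v (a - b) ≤ v n`; so the map is
injective on elements with `v (a - b) ≥ k > v n`. Conversely, when `v (u - 1) ≥ k + v n`, Newton's
iteration for `X ^ n - u` started at `1` raises the defect `v (x ^ n - u)` by one at each step
while its `m`-th step has valuation at least `k + m`. It converges because `K`, being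
finite-dimensional over `ℚ_p`, is complete for the norm `b ^ (-v x)`, and its limit is an `n`-th
root of `u` that is congruent to `1` modulo `π ^ k`.
-/

open Polynomial Set

theorem Polynomial.newtonMap_X_pow_sub_C {F : Type*} [Field F] (n : ℕ) (u x : F) :
    (X ^ n - C u).newtonMap x = x - (x ^ n - u) / (n * x ^ (n - 1)) := by
  simp [newtonMap_apply, derivative_X_pow, div_eq_inv_mul, mul_comm]

namespace WithTop

noncomputable def zpowNeg (b : ℝ) : WithTop ℤ → ℝ
  | ⊤ => 0
  | (t : ℤ) => b ^ (-t)

variable {b : ℝ}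

@[simp] theorem zpowNeg_top : zpowNeg b ⊤ = 0 := rfl

@[simp] theorem zpowNeg_coe (t : ℤ) : zpowNeg b t = b ^ (-t) := rfl

theorem zpowNeg_add (hb : b ≠ 0) (s t : WithTop ℤ) :
    zpowNeg b (s + t) = zpowNeg b s * zpowNeg b t := by
  induction s using WithTop.recTopCoe <;> induction t using WithTop.recTopCoe <;>
    simp [← WithTop.coe_add, zpow_add₀ hb, mul_comm]

theorem zpowNeg_nonneg (hb : 0 ≤ b) (t : WithTop ℤ) : 0 ≤ zpowNeg b t := by
  induction t using WithTop.recTopCoe <;> simp [zpow_nonneg hb]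

theorem zpowNeg_eq_zero_iff (hb : b ≠ 0) {t : WithTop ℤ} : zpowNeg b t = 0 ↔ t = ⊤ := by
  induction t using WithTop.recTopCoe <;> simp [zpow_ne_zero _ hb]

theorem zpowNeg_antitone (hb : 1 ≤ b) : Antitone (zpowNeg b) := by
  intro s t hst
  induction t using WithTop.recTopCoe
  · exact zpowNeg_nonneg (by linarith) s
  induction s using WithTop.recTopCoe
  · simp at hst
  simpa using zpow_le_zpow_right₀ hb (neg_le_neg (WithTop.coe_le_coe.1 hst))

theorem zpowNeg_le_zpow_neg_iff (hb : 1 < b) (c : ℤ) {t : WithTop ℤ} :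
    zpowNeg b t ≤ b ^ (-c) ↔ (c : WithTop ℤ) ≤ t := by
  induction t using WithTop.recTopCoe
  · simpa using zpow_nonneg (by linarith) _
  · rw [zpowNeg_coe, zpow_le_zpow_iff_right₀ hb, neg_le_neg_iff, WithTop.coe_le_coe]

end WithTop

namespace PadicStructure

variable {p : ℕ} [Fact p.Prime] {K : Type*} [Field K] [Algebra ℚ_[p] K]
  [FiniteDimensional ℚ_[p] K] (V : PadicStructure p K)

theorem v_eq_top_iff {x : K} : V.v x = ⊤ ↔ x = 0 :=
  ⟨fun h => by_contra fun hx => V.v_ne_top hx h, fun h => h ▸ V.v_zero⟩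

theorem exists_v_eq {x : K} (hx : x ≠ 0) : ∃ s : ℤ, V.v x = s :=
  (WithTop.ne_top_iff_exists.1 (V.v_ne_top hx)).imp fun _ => Eq.symm

theorem natCast_ne_zero_of_v_eq {n : ℕ} {c : ℤ} (hvn : V.v n = c) : n ≠ 0 := by
  rintro rfl
  exact WithTop.top_ne_coe (by rw [← hvn, Nat.cast_zero, V.v_zero])

theorem v_one : V.v 1 = 0 := by
  obtain ⟨s, hs⟩ := V.exists_v_eq (one_ne_zero (α := K))
  have h := V.v_mul 1 1
  rw [mul_one, hs] at h
  norm_cast at h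
  rw [hs]
  exact_mod_cast (by omega : s = 0)

def toAddValuation : AddValuation K (WithTop ℤ) :=
  AddValuation.of V.v V.v_zero V.v_one V.v_add V.v_mul

theorem v_neg (x : K) : V.v (-x) = V.v x := V.toAddValuation.map_neg x

theorem v_inv (x : K) : V.v x⁻¹ = -V.v x := V.toAddValuation.map_inv

theorem v_pow (x : K) (n : ℕ) : V.v (x ^ n) = n • V.v x := V.toAddValuation.map_pow x n

theorem v_add_ge {x y : K} {c : WithTop ℤ} (hx : c ≤ V.v x) (hy : c ≤ V.v y) :
    c ≤ V.v (x + y) :=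
  V.toAddValuation.map_le_add hx hy

theorem v_sub_ge {x y : K} {c : WithTop ℤ} (hx : c ≤ V.v x) (hy : c ≤ V.v y) :
    c ≤ V.v (x - y) :=
  V.toAddValuation.map_le_sub hx hy

theorem v_eq_zero_of_pos_v_sub_one {x : K} (h : 0 < V.v (x - 1)) : V.v x = 0 := by
  have h1 : V.v (1 + (x - 1)) = V.v 1 :=
    V.toAddValuation.map_add_eq_of_lt_left (by rw [V.toAddValuation.map_one]; exact h)
  rwa [add_sub_cancel, V.v_one] at h1

theorem v_pow_of_v_eq {x : K} {s : ℤ} (hs : V.v x = s) (n : ℕ) :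
    V.v (x ^ n) = ((n * s : ℤ) : WithTop ℤ) := by
  rw [V.v_pow, hs, ← WithTop.coe_nsmul, nsmul_eq_mul]

theorem v_zpow_of_v_eq_one {π : K} (hπ : V.v π = ((1 : ℤ) : WithTop ℤ)) (s : ℤ) :
    V.v (π ^ s) = s := by
  obtain ⟨n, rfl | rfl⟩ := Int.eq_nat_or_neg s
  · simpa using V.v_pow_of_v_eq hπ n
  · rw [zpow_neg, zpow_natCast, V.v_inv, V.v_pow_of_v_eq hπ n]
    simp

theorem eq_zero_of_forall_le_v {y : K} {c : ℤ} (h : ∀ m : ℕ, ((c + m : ℤ) : WithTop ℤ) ≤ V.v y) :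
    y = 0 := by
  by_contra hy
  obtain ⟨s, hs⟩ := V.exists_v_eq hy
  have := h (s - c + 1).toNat
  rw [hs, WithTop.coe_le_coe] at this
  omega

def integers : Subring K := Valuation.integer V.toAddValuation

theorem le_v_add_pow_sub_pow_sub {x h : K} {c : ℤ} (hx : 0 ≤ V.v x) (hc : 0 ≤ c)
    (hh : (c : WithTop ℤ) ≤ V.v h) (n : ℕ) :
    ((2 * c : ℤ) : WithTop ℤ) ≤ V.v ((x + h) ^ n - x ^ n - n * x ^ (n - 1) * h) := by
  obtain ⟨r, hr⟩ := powAddExpansion (⟨x, hx⟩ : V.integers)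
    ⟨h, (WithTop.coe_nonneg.2 hc).trans hh⟩ n
  have hr' : (x + h) ^ n - x ^ n - n * x ^ (n - 1) * h = r * h ^ 2 := by
    have := congrArg Subtype.val hr
    push_cast at this
    linear_combination this
  rw [hr', V.v_mul, V.v_pow, two_nsmul, two_mul, WithTop.coe_add, ← zero_add (_ + _)]
  exact add_le_add r.2 (add_le_add hh hh)

theorem v_sub_le_v_pow_sub_pow {x y : K} (hx : 0 ≤ V.v x) (hy : 0 ≤ V.v y) (n : ℕ) :
    V.v (x - y) ≤ V.v (x ^ n - y ^ n) := by
  obtain ⟨z, hz⟩ := powSubPowFactor (⟨x, hx⟩ : V.integers) ⟨y, hy⟩ n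
  have hz' : x ^ n - y ^ n = z * (x - y) := by simpa using congrArg Subtype.val hz
  rw [hz', V.v_mul]
  exact le_add_of_nonneg_left z.2

theorem le_v_pow_sub_one {n vn k : ℕ} (hvn : V.v n = ((vn : ℤ) : WithTop ℤ)) (hk : vn ≤ k) {b : K}
    (hb : ((k : ℤ) : WithTop ℤ) ≤ V.v (b - 1)) :
    ((k + vn : ℤ) : WithTop ℤ) ≤ V.v (b ^ n - 1) := by
  have hsplit : b ^ n - 1 =
      ((1 + (b - 1)) ^ n - 1 ^ n - n * 1 ^ (n - 1) * (b - 1)) + n * (b - 1) := by ring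
  rw [hsplit]
  refine V.v_add_ge ((WithTop.coe_le_coe.2 (by omega)).trans
    (V.le_v_add_pow_sub_pow_sub (by rw [V.v_one]) (by omega) hb n)) ?_
  rw [V.v_mul, hvn, add_comm, WithTop.coe_add]
  exact add_le_add le_rfl hb

theorem eq_of_pow_eq_of_v_sub_gt {n vn : ℕ} (hvn : V.v n = ((vn : ℤ) : WithTop ℤ)) {a b : K}
    (hb : V.v b = 0) (hab : a ^ n = b ^ n) (h : ((vn : ℤ) : WithTop ℤ) < V.v (a - b)) :
    a = b := by
  by_contra hne
  obtain ⟨s, hs⟩ := V.exists_v_eq (sub_ne_zero.2 hne)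
  rw [hs, WithTop.coe_lt_coe] at h
  have key := V.le_v_add_pow_sub_pow_sub hb.ge (by omega) hs.ge n
  rw [add_sub_cancel, hab, sub_self, zero_sub, V.v_neg, V.v_mul, V.v_mul, hvn, V.v_pow, hb,
    nsmul_zero, add_zero, hs, ← WithTop.coe_add, WithTop.coe_le_coe] at key
  omega

theorem le_v_newtonMap_sub {n vn : ℕ} (hvn : V.v n = ((vn : ℤ) : WithTop ℤ)) {d : ℤ}
    (hd : vn < d) {u x : K} (hx : V.v x = 0) (hxu : ((vn + d : ℤ) : WithTop ℤ) ≤ V.v (x ^ n - u)) :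
    (d : WithTop ℤ) ≤ V.v ((X ^ n - C u).newtonMap x - x) ∧
      ((vn + d + 1 : ℤ) : WithTop ℤ) ≤ V.v ((X ^ n - C u).newtonMap x ^ n - u) := by
  rw [newtonMap_X_pow_sub_C]
  set q := (x ^ n - u) / (n * x ^ (n - 1))
  have hder : V.v (n * x ^ (n - 1)) = ((vn : ℤ) : WithTop ℤ) := by
    rw [V.v_mul, hvn, V.v_pow, hx, nsmul_zero, add_zero]
  have hq : q * (n * x ^ (n - 1)) = x ^ n - u :=
    div_mul_cancel₀ _ (by rw [Ne, ← V.v_eq_top_iff, hder]; exact WithTop.coe_ne_top)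
  have hvq : (d : WithTop ℤ) ≤ V.v q := by
    rwa [← WithTop.add_le_add_iff_right (WithTop.coe_ne_top (a := (vn : ℤ))),
      add_comm (d : WithTop ℤ), ← WithTop.coe_add, ← hder, ← V.v_mul, hq]
  refine ⟨by rwa [sub_sub_cancel_left, V.v_neg], ?_⟩
  have hrem : (x - q) ^ n - u = (x + -q) ^ n - x ^ n - n * x ^ (n - 1) * -q := by
    linear_combination (-1 : K) * hq
  rw [hrem]
  -- the step is quadratic: the new defect is of order `2 d ≥ v n + d + 1`
  exact (WithTop.coe_le_coe.2 (by omega)).trans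
    (V.le_v_add_pow_sub_pow_sub (c := d) hx.ge (by omega) (by rwa [V.v_neg]) n)

noncomputable def absoluteValue (b : ℝ) (hb : 1 < b) : AbsoluteValue K ℝ where
  toFun x := WithTop.zpowNeg b (V.v x)
  map_mul' x y := by simp only [V.v_mul, WithTop.zpowNeg_add (by positivity)]
  nonneg' _ := WithTop.zpowNeg_nonneg (by positivity) _
  eq_zero' _ := by rw [WithTop.zpowNeg_eq_zero_iff (by positivity), V.v_eq_top_iff]
  add_le' x y := calc
    WithTop.zpowNeg b (V.v (x + y)) ≤ WithTop.zpowNeg b (min (V.v x) (V.v y)) :=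
      WithTop.zpowNeg_antitone hb.le (V.v_add x y)
    _ = max (WithTop.zpowNeg b (V.v x)) (WithTop.zpowNeg b (V.v y)) :=
      (WithTop.zpowNeg_antitone hb.le).map_min
    _ ≤ _ := max_le_add_of_nonneg (WithTop.zpowNeg_nonneg (by positivity) _)
      (WithTop.zpowNeg_nonneg (by positivity) _)

/-- One can take `b = p ^ (1 / e)`, with `e` the ramification index. -/
theorem exists_absoluteValue_algebraMap_eq_norm :
    ∃ (b : ℝ) (hb : 1 < b), ∀ r : ℚ_[p], V.absoluteValue b hb (algebraMap ℚ_[p] K r) = ‖r‖ := by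
  obtain ⟨e, he, hram⟩ := V.ramification
  have hp : (1 : ℝ) < p := by exact_mod_cast (Fact.out : p.Prime).one_lt
  have hbe : ((p : ℝ) ^ ((e : ℝ)⁻¹)) ^ e = p := Real.rpow_inv_natCast_pow (by positivity) he.ne'
  refine ⟨(p : ℝ) ^ ((e : ℝ)⁻¹), Real.one_lt_rpow hp (by positivity), fun r => ?_⟩
  rcases eq_or_ne r 0 with rfl | hr
  · simp [absoluteValue]
  change WithTop.zpowNeg _ (V.v _) = _
  rw [hram r hr, WithTop.zpowNeg_coe, Padic.norm_eq_zpow_neg_valuation hr, neg_mul_eq_mul_neg,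
    zpow_mul, zpow_natCast, hbe]

theorem le_v_sub_of_forall_le_v_succ_sub {a : ℕ → K} {c : ℤ}
    (ha : ∀ m : ℕ, ((c + m : ℤ) : WithTop ℤ) ≤ V.v (a (m + 1) - a m)) {m j : ℕ} (hmj : m ≤ j) :
    ((c + m : ℤ) : WithTop ℤ) ≤ V.v (a j - a m) := by
  induction j, hmj using Nat.le_induction with
  | base => simp [V.v_zero]
  | succ j hmj ih =>
    rw [← sub_add_sub_cancel]
    exact V.v_add_ge ((WithTop.coe_le_coe.2 (by omega)).trans (ha j)) ih

theorem exists_forall_le_v_sub {a : ℕ → K} {c : ℤ}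
    (ha : ∀ m : ℕ, ((c + m : ℤ) : WithTop ℤ) ≤ V.v (a (m + 1) - a m)) :
    ∃ x, ∀ m : ℕ, ((c + m : ℤ) : WithTop ℤ) ≤ V.v (x - a m) := by
  obtain ⟨b, hb, hnorm⟩ := V.exists_absoluteValue_algebraMap_eq_norm
  let _ : NormedField K := (V.absoluteValue b hb).toNormedField
  let _ : NormedSpace ℚ_[p] K := ⟨fun r x => by rw [Algebra.smul_def, norm_mul, ← hnorm]; rfl⟩
  have : CompleteSpace K := FiniteDimensional.complete ℚ_[p] K
  have hle (x : K) (t : ℤ) : ‖x‖ ≤ b ^ (-t) ↔ (t : WithTop ℤ) ≤ V.v x :=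
    WithTop.zpowNeg_le_zpow_neg_iff hb t
  have hcauchy : CauchySeq a := by
    refine cauchySeq_of_le_geometric b⁻¹ (b ^ (-c)) (inv_lt_one_of_one_lt₀ hb) fun m => ?_
    rw [dist_eq_norm, norm_sub_rev, inv_pow, ← zpow_natCast, ← zpow_neg,
      ← zpow_add₀ (by positivity), ← neg_add]
    exact (hle _ _).2 (ha m)
  obtain ⟨x, hx⟩ := cauchySeq_tendsto_of_complete hcauchy
  refine ⟨x, fun m => (hle _ _).1 ?_⟩
  rw [← dist_eq_norm, ← Metric.mem_closedBall]
  refine Metric.isClosed_closedBall.mem_of_tendsto hx (Filter.eventually_atTop.2 ⟨m, fun j hj => ?_⟩)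
  rw [Metric.mem_closedBall, dist_eq_norm]
  exact (hle _ _).2 (V.le_v_sub_of_forall_le_v_succ_sub ha hj)

theorem exists_pow_eq_of_le_v_sub_one {n vn k : ℕ} (hvn : V.v n = ((vn : ℤ) : WithTop ℤ))
    (hk : vn < k) {u : K} (hu : ((k + vn : ℤ) : WithTop ℤ) ≤ V.v (u - 1)) :
    ∃ x : K, x ^ n = u ∧ ((k : ℤ) : WithTop ℤ) ≤ V.v (x - 1) := by
  set a : ℕ → K := fun m => (X ^ n - C u).newtonMap^[m] 1
  have hunit {y : K} (hy : ((k : ℤ) : WithTop ℤ) ≤ V.v (y - 1)) : V.v y = 0 :=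
    V.v_eq_zero_of_pos_v_sub_one ((WithTop.coe_pos.2 (by omega)).trans_le hy)
  have hstep (m : ℕ) (h1 : ((k : ℤ) : WithTop ℤ) ≤ V.v (a m - 1))
      (h2 : ((vn + (k + m) : ℤ) : WithTop ℤ) ≤ V.v (a m ^ n - u)) :
      ((k + m : ℤ) : WithTop ℤ) ≤ V.v (a (m + 1) - a m) ∧
        ((vn + (k + (m + 1 : ℕ)) : ℤ) : WithTop ℤ) ≤ V.v (a (m + 1) ^ n - u) := by
    have ha : a (m + 1) = (X ^ n - C u).newtonMap (a m) := Function.iterate_succ_apply' _ _ _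
    rw [ha]
    obtain ⟨hdiff, hdefect⟩ := V.le_v_newtonMap_sub hvn (d := k + m) (by omega) (hunit h1) h2
    exact ⟨hdiff, (WithTop.coe_le_coe.2 (by omega)).trans hdefect⟩
  have hinv (m : ℕ) : ((k : ℤ) : WithTop ℤ) ≤ V.v (a m - 1) ∧
      ((vn + (k + m) : ℤ) : WithTop ℤ) ≤ V.v (a m ^ n - u) := by
    induction m with
    | zero =>
      refine ⟨by simp [a, V.v_zero], ?_⟩
      rw [show a 0 ^ n - u = -(u - 1) by simp [a], V.v_neg]
      exact (WithTop.coe_le_coe.2 (by omega)).trans hu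
    | succ m ih =>
      obtain ⟨hdiff, hdefect⟩ := hstep m ih.1 ih.2
      refine ⟨?_, hdefect⟩
      rw [← sub_add_sub_cancel _ (a m)]
      exact V.v_add_ge ((WithTop.coe_le_coe.2 (by omega)).trans hdiff) ih.1
  obtain ⟨x, hx⟩ := V.exists_forall_le_v_sub fun m => (hstep m (hinv m).1 (hinv m).2).1
  have hx1 : ((k : ℤ) : WithTop ℤ) ≤ V.v (x - 1) := by simpa [a] using hx 0
  refine ⟨x, sub_eq_zero.1 (V.eq_zero_of_forall_le_v (c := k) fun m => ?_), hx1⟩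
  rw [← sub_add_sub_cancel _ (a m ^ n)]
  exact V.v_add_ge ((hx m).trans (V.v_sub_le_v_pow_sub_pow (hunit hx1).ge (hunit (hinv m).1).ge n))
    ((WithTop.coe_le_coe.2 (by omega)).trans (hinv m).2)

theorem mem_shift_iff {π : K} {X : Set K} {k : ℕ} {x : K} {s : ℤ} (hs : V.v x = s) :
    x ∈ V.shift π X k ↔ x ∈ X ∧ ((k : ℤ) : WithTop ℤ) ≤ V.v (π ^ (-s) * x - 1) := by
  have hx : x ≠ 0 := by
    rintro rfl
    exact WithTop.top_ne_coe (V.v_zero.symm.trans hs)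
  refine ⟨fun ⟨hX, _, h⟩ => ⟨hX, h s hs⟩, fun ⟨hX, h⟩ => ⟨hX, hx, fun t ht => ?_⟩⟩
  obtain rfl : t = s := WithTop.coe_injective (ht.symm.trans hs)
  exact h

theorem pow_mapsTo_shift (π : K) {n vn k : ℕ} (hvn : V.v n = ((vn : ℤ) : WithTop ℤ)) (hk : vn ≤ k) :
    MapsTo (· ^ n) (V.shift π V.R k) (V.R ∩ V.shift π (V.P n) (k + vn)) := by
  intro x hx
  obtain ⟨s, hs⟩ := V.exists_v_eq hx.2.1
  obtain ⟨hxR, hx1⟩ := (V.mem_shift_iff hs).1 hx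
  refine ⟨?_, (V.mem_shift_iff (V.v_pow_of_v_eq hs n)).2 ⟨⟨pow_ne_zero _ hx.2.1, x, rfl⟩, ?_⟩⟩
  · change 0 ≤ V.v (x ^ n)
    rw [V.v_pow]
    exact nsmul_nonneg hxR n
  · have hpow : π ^ (-(n * s)) * x ^ n = (π ^ (-s) * x) ^ n := by
      rw [mul_pow, ← zpow_natCast (π ^ (-s)), ← zpow_mul, neg_mul, mul_comm s]
    rw [hpow]
    exact_mod_cast V.le_v_pow_sub_one hvn hk hx1

theorem pow_injOn_shift (π : K) (X : Set K) {n vn k : ℕ} (hvn : V.v n = ((vn : ℤ) : WithTop ℤ))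
    (hk : vn < k) : InjOn (· ^ n) (V.shift π X k) := by
  intro x hx y hy (hxy : x ^ n = y ^ n)
  obtain ⟨s, hs⟩ := V.exists_v_eq hx.2.1
  obtain ⟨t, ht⟩ := V.exists_v_eq hy.2.1
  obtain rfl : s = t := by
    have hst := V.v_pow_of_v_eq hs n
    rw [hxy, V.v_pow_of_v_eq ht, WithTop.coe_inj] at hst
    exact (mul_left_cancel₀ (by exact_mod_cast V.natCast_ne_zero_of_v_eq hvn) hst).symm
  have hx1 := ((V.mem_shift_iff hs).1 hx).2
  have hy1 := ((V.mem_shift_iff ht).1 hy).2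
  have hunit : V.v (π ^ (-s) * y) = 0 :=
    V.v_eq_zero_of_pos_v_sub_one ((WithTop.coe_pos.2 (by omega)).trans_le hy1)
  have hπs : π ^ (-s) ≠ 0 :=
    left_ne_zero_of_mul (b := y) fun h => by rw [h, V.v_zero] at hunit; simp at hunit
  refine mul_left_cancel₀ hπs (V.eq_of_pow_eq_of_v_sub_gt hvn hunit (by rw [mul_pow, mul_pow, hxy])
    ((WithTop.coe_lt_coe.2 (by omega : (vn : ℤ) < k)).trans_le ?_))
  rw [← sub_sub_sub_cancel_right _ _ 1]
  exact V.v_sub_ge hx1 hy1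

theorem pow_surjOn_shift {π : K} (hπ : V.v π = ((1 : ℤ) : WithTop ℤ)) {n vn k : ℕ}
    (hvn : V.v n = ((vn : ℤ) : WithTop ℤ)) (hk : vn < k) :
    SurjOn (· ^ n) (V.shift π V.R k) (V.R ∩ V.shift π (V.P n) (k + vn)) := by
  rintro _ ⟨hyR, hy⟩
  obtain ⟨z, rfl⟩ := hy.1.2
  have hπ0 : π ≠ 0 := by rintro rfl; simp [V.v_zero] at hπ
  have hn := V.natCast_ne_zero_of_v_eq hvn
  obtain ⟨s, hs⟩ := V.exists_v_eq (ne_zero_pow hn hy.2.1)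
  have hsn := V.v_pow_of_v_eq hs n
  have hs0 : 0 ≤ s := by
    have hyR' : 0 ≤ V.v (z ^ n) := hyR
    rw [hsn, WithTop.coe_nonneg] at hyR'
    exact (mul_nonneg_iff_of_pos_left (by omega : (0 : ℤ) < n)).1 hyR'
  obtain ⟨x, hxn, hx1⟩ := V.exists_pow_eq_of_le_v_sub_one hvn hk
    (by exact_mod_cast ((V.mem_shift_iff hsn).1 hy).2)
  have hxs : V.v (π ^ s * x) = s := by
    rw [V.v_mul, V.v_zpow_of_v_eq_one hπ,
      V.v_eq_zero_of_pos_v_sub_one ((WithTop.coe_pos.2 (by omega)).trans_le hx1), add_zero]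
  refine ⟨π ^ s * x, (V.mem_shift_iff hxs).2 ⟨?_, ?_⟩, ?_⟩
  · change 0 ≤ V.v _
    rw [hxs]
    exact WithTop.coe_nonneg.2 hs0
  · rwa [← mul_assoc, ← zpow_add₀ hπ0, neg_add_cancel, zpow_zero, one_mul]
  · change (π ^ s * x) ^ n = z ^ n
    rw [mul_pow, hxn, ← mul_assoc, ← zpow_natCast, ← zpow_mul, ← zpow_add₀ hπ0,
      show s * n + -(n * s) = 0 by ring, zpow_zero, one_mul]

end PadicStructure

theorem gamma_pow_bijOn_general {p : ℕ} [Fact p.Prime] {K : Type*} [Field K] [Algebra ℚ_[p] K]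
    [FiniteDimensional ℚ_[p] K] (V : PadicStructure p K)
    (π : K) (hπ : V.v π = ((1 : ℤ) : WithTop ℤ))
    (n' : ℕ)
    (vn : ℕ) (hvn : V.v (n' : K) = ((vn : ℤ) : WithTop ℤ))
    (k : ℕ) (hk : vn < k)
    (γ : K) (hγ1 : V.v γ < ((n' : ℤ) : WithTop ℤ)) :
    Set.BijOn (fun x : K => γ * x ^ n') (V.shift π V.R k)
      ((fun y : K => γ * y) '' (V.R ∩ V.shift π (V.P n') (k + vn))) ∧
    ∀ x ∈ V.shift π V.R k, ∀ s : ℤ, V.v x = (s : WithTop ℤ) →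
      V.v (γ * x ^ n') = V.v γ + (((n' : ℤ) * s : ℤ) : WithTop ℤ) := by
  have hγ : γ ≠ 0 := by rintro rfl; simp [V.v_zero] at hγ1
  have hpow : BijOn (· ^ n') (V.shift π V.R k) (V.R ∩ V.shift π (V.P n') (k + vn)) :=
    ⟨V.pow_mapsTo_shift π hvn hk.le, V.pow_injOn_shift π V.R hvn hk, V.pow_surjOn_shift hπ hvn hk⟩
  refine ⟨(mul_right_injective₀ hγ).injOn.bijOn_image.comp hpow, fun x _ s hs => ?_⟩
  rw [V.v_mul, V.v_pow_of_v_eq hs]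

/-- For `0 ≤ v γ < n'`, the map `x ↦ γ x^{n'}` is a bijection from `R^(k)` onto
`γ · (R ∩ P_{n'}^(k'))`, with `v (γ x^{n'}) = v γ + n' · v x`. -/
theorem gamma_pow_bijOn {p : ℕ} [Fact p.Prime] {K : Type*} [Field K] [Algebra ℚ_[p] K]
    [FiniteDimensional ℚ_[p] K] (V : PadicStructure p K)
    (π : K) (hπ : V.v π = ((1 : ℤ) : WithTop ℤ))
    (n' : ℕ) (hn' : 1 ≤ n')
    (vn : ℕ) (hvn : V.v (n' : K) = ((vn : ℤ) : WithTop ℤ))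
    (k : ℕ) (hk : vn < k)
    (γ : K) (hγ0 : ((0 : ℤ) : WithTop ℤ) ≤ V.v γ) (hγ1 : V.v γ < ((n' : ℤ) : WithTop ℤ)) :
    Set.BijOn (fun x : K => γ * x ^ n') (V.shift π V.R k)
      ((fun y : K => γ * y) '' (V.R ∩ V.shift π (V.P n') (k + vn))) ∧
    ∀ x ∈ V.shift π V.R k, ∀ s : ℤ, V.v x = (s : WithTop ℤ) →
      V.v (γ * x ^ n') = V.v γ + (((n' : ℤ) * s : ℤ) : WithTop ℤ) :=
  gamma_pow_bijOn_general V π hπ n' vn hvn k hk γ hγ1
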